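/- arXiv:2102.02753 — 3 statements merged into one kernel-verified Lean document; each statement's English description precedes it below -/
import Mathlib

section
/- For any program P, any base instance B, and any k ≥ 0, the instance computed by the level-k full execution graph of P on B is logically equivalent to the instance Step^k(P,B) produced by k rounds of the breadth-first chase. -/
set_option maxHeartbeats 1000000

namespace TGpaper

attribute [local instance] Classical.propDecidable

/-! ### Basic syntax: atoms over variables (for rules), ground terms, facts -/

/-- An atom over variables only, as used in rules of the form (1) in the paper. -/
structure RAtom where
  pred : ℕ
  args : List ℕ

/-- An existential rule with a single head atom; variables of the head not
occurring in the body are (implicitly) existentially quantified. -/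
structure Rule where
  body : List RAtom
  head : RAtom

/-- Ground terms: constants, or labelled nulls.  A null is labelled by the rule
and the images of the body variables of the trigger that created it, together
with the existential variable it stands for. -/
inductive GTerm where
  | const : ℕ → GTerm
  | null : Rule → List GTerm → ℕ → GTerm

/-- A fact: an atom over ground terms. -/
structure GFact where
  pred : ℕ
  args : List GTerm

def GTerm.isConst : GTerm → Prop
  | .const _ => True
  | _ => False

def GTerm.isNull : GTerm → Prop
  | .null _ _ _ => True
  | _ => False

/-- Depth of a term: constants have depth 1, a null has depth one plus the
maximal depth of the terms in the range of the trigger that created it. -/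
def GTerm.depth : GTerm → ℕ
  | .const _ => 1
  | .null _ ts _ => 1 + (ts.attach.map (fun t => t.1.depth)).foldr max 0
decreasing_by
  have := List.sizeOf_lt_of_mem t.2
  simp only [GTerm.null.sizeOf_spec]
  omega

/-- Renaming all constants by a bijection `g`, leaving the null structure intact. -/
def GTerm.renameConst (g : ℕ ≃ ℕ) : GTerm → GTerm
  | .const c => .const (g c)
  | .null r ts z => .null r (ts.attach.map (fun t => t.1.renameConst g)) z
decreasing_by
  have := List.sizeOf_lt_of_mem t.2
  simp only [GTerm.null.sizeOf_spec]
  omega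

def applyRAtom (h : ℕ → GTerm) (a : RAtom) : GFact := ⟨a.pred, a.args.map h⟩

def GFact.mapT (σ : GTerm → GTerm) (f : GFact) : GFact := ⟨f.pred, f.args.map σ⟩

def GFact.constOnly (f : GFact) : Prop := ∀ t ∈ f.args, t.isConst

/-- A null-free instance. -/
def NullFree (I : Set GFact) : Prop := ∀ f ∈ I, f.constOnly

/-- A base instance w.r.t. a set `EP` of extensional predicates. -/
def BaseInstance (EP : Set ℕ) (B : Set GFact) : Prop :=
  ∀ f ∈ B, f.pred ∈ EP ∧ f.constOnly

/-! ### Homomorphisms -/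

/-- `σ` is a homomorphism from the set of facts `A` into `B`: it fixes all
constants (hence maps nulls to ground terms) and maps each fact of `A` into `B`. -/
def isHom (σ : GTerm → GTerm) (A B : Set GFact) : Prop :=
  (∀ c, σ (GTerm.const c) = GTerm.const c) ∧ ∀ f ∈ A, f.mapT σ ∈ B

/-- `homEntails B A` : `B ⊨ A`, i.e. there is a homomorphism from `A` into `B`. -/
def homEntails (B A : Set GFact) : Prop := ∃ σ, isHom σ A B

def homEquiv (A B : Set GFact) : Prop := homEntails A B ∧ homEntails B A

/-! ### Rules, programs, models -/

def Rule.bodyVars (r : Rule) : List ℕ := r.body.flatMap RAtom.args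

def Rule.isLinear (r : Rule) : Prop := r.body.length = 1

def Rule.isDatalog (r : Rule) : Prop := ∀ x ∈ r.head.args, x ∈ r.bodyVars

def Rule.extensionalBody (EP : Set ℕ) (r : Rule) : Prop := ∀ a ∈ r.body, a.pred ∈ EP

def Rule.intensionalBody (EP : Set ℕ) (r : Rule) : Prop := ∀ a ∈ r.body, a.pred ∉ EP

/-- Well-formed program: head predicates are intensional and each body consists
exclusively of extensional predicates or exclusively of intensional ones. -/
def ProgramWF (EP : Set ℕ) (P : Set Rule) : Prop :=
  ∀ r ∈ P, r.head.pred ∉ EP ∧ (r.extensionalBody EP ∨ r.intensionalBody EP)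

/-- A rule holds in an instance `I`. -/
def ruleSat (r : Rule) (I : Set GFact) : Prop :=
  ∀ h : ℕ → GTerm, (∀ a ∈ r.body, applyRAtom h a ∈ I) →
    ∃ h' : ℕ → GTerm, (∀ x ∈ r.bodyVars, h' x = h x) ∧ applyRAtom h' r.head ∈ I

def isModel (P : Set Rule) (B I : Set GFact) : Prop := B ⊆ I ∧ ∀ r ∈ P, ruleSat r I

def isUniversalModel (P : Set Rule) (B M : Set GFact) : Prop :=
  isModel P B M ∧ ∀ I, isModel P B I → homEntails I M

/-! ### Conjunctive queries -/

inductive VTerm where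
  | const : ℕ → VTerm
  | var : ℕ → VTerm

/-- A (null-free) atom over constants and variables, as used in queries. -/
structure VAtom where
  pred : ℕ
  args : List VTerm

def applyVAtom (h : ℕ → GTerm) (a : VAtom) : GFact :=
  ⟨a.pred, a.args.map (fun t => match t with | .const c => .const c | .var x => h x)⟩

/-- A conjunctive query with head variables `head` and body `body`. -/
structure CQ where
  head : List ℕ
  body : List VAtom

/-- `t` is an answer to `Q` on the instance `I`. -/
def isAnswer (Q : CQ) (I : Set GFact) (t : List GTerm) : Prop :=
  ∃ h : ℕ → GTerm, Q.head.map h = t ∧ ∀ a ∈ Q.body, applyVAtom h a ∈ I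

def cqContained (Q1 Q2 : CQ) : Prop := ∀ I t, isAnswer Q1 I t → isAnswer Q2 I t

/-- A Boolean conjunctive query is just a body. -/
abbrev BCQ := List VAtom

def satBCQ (I : Set GFact) (Q : BCQ) : Prop := ∃ h : ℕ → GTerm, ∀ a ∈ Q, applyVAtom h a ∈ I

/-- `(P,B) ⊨ Q` : `Q` holds in every model of the knowledge base. -/
def kbEntailsBCQ (P : Set Rule) (B : Set GFact) (Q : BCQ) : Prop :=
  ∀ I, isModel P B I → satBCQ I Q

/-! ### The (breadth-first, equivalent) chase -/

/-- Canonical extension of a trigger `h`, sending existential variables to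
fresh labelled nulls. -/
def Rule.canon (r : Rule) (h : ℕ → GTerm) : ℕ → GTerm :=
  fun x => if x ∈ r.bodyVars then h x else GTerm.null r (r.bodyVars.map h) x

/-- One (oblivious, breadth-first) chase round over `I`. -/
def chaseStep (P : Set Rule) (I : Set GFact) : Set GFact :=
  I ∪ { f | ∃ r ∈ P, ∃ h : ℕ → GTerm,
        (∀ a ∈ r.body, applyRAtom h a ∈ I) ∧ f = applyRAtom (r.canon h) r.head }

/-- `Step P B i` : the instance produced by the `i`-th round of the
breadth-first chase; the chase stops (stays put) as soon as the result of a
round is entailed by the previous instance (the "equivalent chase"). -/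
noncomputable def Step (P : Set Rule) (B : Set GFact) : ℕ → Set GFact
  | 0 => B
  | n + 1 =>
      if homEntails (Step P B n) (chaseStep P (Step P B n)) then Step P B n
      else chaseStep P (Step P B n)

/-- The (possibly infinite) result of the chase. -/
def ChaseResult (P : Set Rule) (B : Set GFact) : Set GFact := ⋃ n, Step P B n


/-! ### Execution graphs -/

/-- An execution graph: finitely many nodes `Fin n`, each labelled with a
rule; `parent v i` is the node feeding the `i`-th body atom of `v` (if any).
Acyclicity is enforced by requiring parents to have smaller indices
(a topological ordering). -/
structure EG where
  n : ℕ
  rul : Fin n → Rule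
  parent : Fin n → ℕ → Option (Fin n)
  topo : ∀ v i u, parent v i = some u → u < v

/-- Output of a rule given, for each body position, the instance over which
that body atom is evaluated (Definition of guided evaluation). -/
def nodeOut (r : Rule) (inp : ℕ → Set GFact) : Set GFact :=
  { f | ∃ h : ℕ → GTerm,
      (∀ i : Fin r.body.length, applyRAtom h (r.body.get i) ∈ inp i.val) ∧
      f = applyRAtom (r.canon h) r.head }

/-- `G.eval B v` : the set of facts `v(B)` computed at node `v` when reasoning
over the graph with base instance `B`. -/
def EG.eval (G : EG) (B : Set GFact) (v : Fin G.n) : Set GFact :=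
  nodeOut (G.rul v) (fun i =>
    match hp : G.parent v i with
    | some u => G.eval B u
    | none => B)
termination_by v.val
decreasing_by exact G.topo _ _ _ hp

/-- The instance feeding body position `i` of node `v`. -/
def EG.inp (G : EG) (B : Set GFact) (v : Fin G.n) (i : ℕ) : Set GFact :=
  match G.parent v i with
  | some u => G.eval B u
  | none => B

/-- `G(B)`. -/
def EG.result (G : EG) (B : Set GFact) : Set GFact := B ∪ ⋃ v, G.eval B v

/-- Well-formedness of an execution graph w.r.t. extensional predicates `EP`
and program `P`: nodes are labelled with rules of `P`; a body position has a
parent iff its predicate is intensional, and the parent's head predicate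
matches; there are no edges beyond the body positions. -/
def EG.WF (EP : Set ℕ) (P : Set Rule) (G : EG) : Prop :=
  (∀ v, G.rul v ∈ P) ∧
  (∀ (v : Fin G.n) (i : Fin (G.rul v).body.length),
      (((G.rul v).body.get i).pred ∈ EP ↔ G.parent v i.val = none) ∧
      ∀ u, G.parent v i.val = some u →
        (G.rul u).head.pred = ((G.rul v).body.get i).pred) ∧
  (∀ v i, (G.rul v).body.length ≤ i → G.parent v i = none)

/-- `G` is an (instance-independent) trigger graph for `P`. -/
def EG.IsTGFor (EP : Set ℕ) (P : Set Rule) (G : EG) : Prop :=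
  ∀ B, BaseInstance EP B → ∀ Q : BCQ, kbEntailsBCQ P B Q ↔ satBCQ (G.result B) Q

/-- `G` is an (instance-dependent) trigger graph for the KB `(P,B)`. -/
def EG.IsTGForKB (P : Set Rule) (B : Set GFact) (G : EG) : Prop :=
  ∀ Q : BCQ, kbEntailsBCQ P B Q ↔ satBCQ (G.result B) Q

def EG.edgeRel (G : EG) (u v : Fin G.n) : Prop := ∃ i, G.parent v i = some u

/-- The depth of `G` (the length of its longest path) is at most `k`:
every directed path visits at most `k+1` nodes. -/
def EG.depthLE (G : EG) (k : ℕ) : Prop :=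
  ∀ l : List (Fin G.n), l.Chain' G.edgeRel → l.length ≤ k + 1

/-- The depth of a node: the length of the longest path ending in it. -/
noncomputable def EG.nodeDepth (G : EG) (v : Fin G.n) : ℕ :=
  (Finset.univ.filter fun u : Fin G.n => ∃ i, G.parent v i = some u).attach.sup
    fun u => G.nodeDepth u.1 + 1
termination_by v.val
decreasing_by
  obtain ⟨i, hi⟩ := (Finset.mem_filter.mp u.2).2
  exact G.topo _ _ _ hi

/-- `G` is (a graph containing) the level-`k` full execution graph of `P`:
it is well-formed, all its nodes live at levels `≤ k` (roots at level 1), it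
has a (root) node for every extensional rule, and for every level `2 ≤ l ≤ k`,
every intensional rule `r` and every `l`-compatible combination of nodes it
has a node for `r` with exactly those parents. -/
def EG.IsFullEG (EP : Set ℕ) (P : Set Rule) (k : ℕ) (G : EG) : Prop :=
  G.WF EP P ∧
  (∀ v, G.nodeDepth v + 1 ≤ k) ∧
  (1 ≤ k → ∀ r ∈ P, r.extensionalBody EP →
      ∃ v, G.rul v = r ∧ ∀ i, G.parent v i = none) ∧
  (∀ l, 2 ≤ l → l ≤ k → ∀ r ∈ P, r.intensionalBody EP →
      ∀ u : Fin r.body.length → Fin G.n,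
        (∀ i, (G.rul (u i)).head.pred = (r.body.get i).pred) →
        (∀ i, G.nodeDepth (u i) + 1 < l) →
        (∃ i, G.nodeDepth (u i) + 2 = l) →
        ∃ v, G.rul v = r ∧
          (∀ i : Fin r.body.length, G.parent v i.val = some (u i)) ∧
          (∀ j, r.body.length ≤ j → G.parent v j = none))

/-! ### Preserving homomorphisms and node removal -/

def EG.ancestor (G : EG) (w v : Fin G.n) : Prop := Relation.TransGen G.edgeRel w v

def occursIn (t : GTerm) (I : Set GFact) : Prop := ∃ f ∈ I, t ∈ f.args

/-- A preserving homomorphism from `u(B)` into `v(B)`: a homomorphism mapping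
to itself every null that occurs in `w(B)` for some ancestor `w` of `u`. -/
def EG.preservingHom (G : EG) (B : Set GFact) (u v : Fin G.n) (σ : GTerm → GTerm) : Prop :=
  isHom σ (G.eval B u) (G.eval B v) ∧
  ∀ t, t.isNull → (∃ w, G.ancestor w u ∧ occursIn t (G.eval B w)) → σ t = t

/-- `G'` is the graph obtained from `G` by removing node `u` and redirecting
every edge `u →ᵢ w` to `v →ᵢ w` (up to a renaming `ι` of the node indices). -/
def RemoveRedirect (G : EG) (u v : Fin G.n) (G' : EG) : Prop :=
  ∃ ι : Fin G'.n → Fin G.n,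
    Function.Injective ι ∧ (∀ w, ι w ≠ u) ∧ (∀ w : Fin G.n, w ≠ u → ∃ w', ι w' = w) ∧
    (∀ w', G'.rul w' = G.rul (ι w')) ∧
    (∀ w' i, G'.parent w' i = none ↔ G.parent (ι w') i = none) ∧
    (∀ w' i p', G'.parent w' i = some p' ↔
      ((G.parent (ι w') i = some u ∧ ι p' = v) ∨
       (ι p' ≠ u ∧ G.parent (ι w') i = some (ι p'))))

/-! ### Pattern isomorphism -/

def GFact.renameC (g : ℕ ≃ ℕ) (f : GFact) : GFact := f.mapT (GTerm.renameConst g)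

/-- Two facts are pattern-isomorphic: same predicate, and a bijection on
constants maps one to the other. -/
def patternIso (f1 f2 : GFact) : Prop := ∃ g : ℕ ≃ ℕ, f2 = f1.renameC g

def predsOfProg (P : Set Rule) : Set ℕ :=
  { p | ∃ r ∈ P, p = r.head.pred ∨ ∃ a ∈ r.body, p = a.pred }

/-- `HP` is a set of representatives of the pattern-isomorphism classes of the
(constant-only) facts over the extensional predicates of `P`. -/
def IsRepSet (EP : Set ℕ) (P : Set Rule) (HP : Set GFact) : Prop :=
  (∀ f ∈ HP, f.pred ∈ EP ∧ f.pred ∈ predsOfProg P ∧ f.constOnly) ∧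
  (∀ f : GFact, f.pred ∈ EP → f.pred ∈ predsOfProg P → f.constOnly →
    ∃ f' ∈ HP, patternIso f f')

/-! ### EG-rewritings for Datalog -/

def applyVSub (θ : ℕ → ℕ) (a : RAtom) : RAtom := ⟨a.pred, a.args.map θ⟩

/-- `θ` is a most general unifier of the (variable-only) atoms `a` and `b`. -/
def IsMGU (a b : RAtom) (θ : ℕ → ℕ) : Prop :=
  applyVSub θ a = applyVSub θ b ∧
  ∀ σ : ℕ → GTerm, applyRAtom σ a = applyRAtom σ b →
    ∃ σ' : ℕ → GTerm, ∀ x, σ x = σ' (θ x)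

/-- A state of the rewriting procedure: head variables plus body atoms, each
tagged with the node of the graph it is associated with (`none` for
extensional atoms). -/
structure QState (G : EG) where
  headVars : List ℕ
  atoms : List (RAtom × Option (Fin G.n))

def stateVars {G : EG} (q : QState G) : Set ℕ :=
  { x | x ∈ q.headVars ∨ ∃ p ∈ q.atoms, x ∈ p.1.args }

/-- One rewriting step: pick an atom `a` associated with node `u`, rename the
rule of `u` apart, unify its head with `a` via an MGU `θ`, replace `a` by the
(renamed) body of the rule of `u` (tagging positions by the parents of `u`)
and apply `θ` everywhere. -/
def RewStep (G : EG) (q q' : QState G) : Prop :=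
  ∃ (pre post : List (RAtom × Option (Fin G.n))) (a : RAtom) (u : Fin G.n)
    (ρ θ : ℕ → ℕ),
    q.atoms = pre ++ (a, some u) :: post ∧
    Function.Injective ρ ∧ (∀ x, ρ x ∉ stateVars q) ∧
    IsMGU (applyVSub ρ (G.rul u).head) a θ ∧
    q'.headVars = q.headVars.map θ ∧
    q'.atoms =
      pre.map (fun p => (applyVSub θ p.1, p.2)) ++
      List.ofFn (fun i : Fin (G.rul u).body.length =>
        (applyVSub θ (applyVSub ρ ((G.rul u).body.get i)), G.parent u i.val)) ++
      post.map (fun p => (applyVSub θ p.1, p.2))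

def initState (G : EG) (v : Fin G.n) : QState G :=
  ⟨(G.rul v).head.args, [((G.rul v).head, some v)]⟩

def RewTerminal {G : EG} (q : QState G) : Prop := ∀ p ∈ q.atoms, p.2 = none

/-- `q` is the EG-rewriting of node `v` in `G`. -/
def IsEGRewriting (G : EG) (v : Fin G.n) (q : QState G) : Prop :=
  Relation.ReflTransGen (RewStep G) (initState G v) q ∧ RewTerminal q

/-- `t` is an answer to (the CQ represented by) the state `q` on instance `I`. -/
def stateAnswer {G : EG} (q : QState G) (I : Set GFact) (t : List GTerm) : Prop :=
  ∃ σ : ℕ → GTerm, q.headVars.map σ = t ∧ ∀ p ∈ q.atoms, applyRAtom σ p.1 ∈ I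

/-- The guard `l` is a subset of the atoms of the rewriting `q` whose
variables cover all head variables of `q`. -/
def GuardOK {G : EG} (q : QState G) (l : List RAtom) : Prop :=
  (∀ a ∈ l, ∃ o, (a, o) ∈ q.atoms) ∧ (∀ y ∈ q.headVars, ∃ a ∈ l, y ∈ a.args)

/-- Optimized node evaluation `v(B, I)` guided by a guard subquery of the
EG-rewriting `q` of `v` (Definition of the optimized rule execution
strategy). -/
def EG.evalOpt (G : EG) (B I : Set GFact) (v : Fin G.n) (q : QState G)
    (l : List RAtom) : Set GFact :=
  { f | ∃ h : ℕ → GTerm,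
      (∀ i : Fin (G.rul v).body.length,
          applyRAtom h ((G.rul v).body.get i) ∈ G.inp B v i.val) ∧
      f = applyRAtom ((G.rul v).canon h) (G.rul v).head ∧
      (∃ σ : ℕ → GTerm,
          q.headVars.map σ = (G.rul v).head.args.map ((G.rul v).canon h) ∧
          ∀ a ∈ l, applyRAtom σ a ∈ B) ∧
      f ∉ I }

/-- One step of `minDatalog`: remove a node `v` whose EG-rewriting is
contained in the EG-rewriting of a node `u` (with the same head predicate and
depth at most that of `v`), redirecting the outgoing edges of `v` to `u`. -/
def MinRemoveStep (G G' : EG) : Prop :=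
  ∃ u v : Fin G.n, u ≠ v ∧ (G.rul u).head.pred = (G.rul v).head.pred ∧
    G.nodeDepth u ≤ G.nodeDepth v ∧
    (∃ qu qv, IsEGRewriting G u qu ∧ IsEGRewriting G v qv ∧
      ∀ I t, stateAnswer qv I t → stateAnswer qu I t) ∧
    RemoveRedirect G v u G'

/-! ### First-order semantics for facts with nulls -/

structure FOStruct where
  Dom : Type
  constI : ℕ → Dom
  predI : ℕ → List Dom → Prop

def evalGTerm (M : FOStruct) (ν : GTerm → M.Dom) : GTerm → M.Dom
  | .const c => M.constI c
  | t => ν t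

/-- `M` satisfies the existential closure of the set of facts `A`
(nulls behave as existentially quantified variables). -/
def satisfiesEx (M : FOStruct) (A : Set GFact) : Prop :=
  ∃ ν : GTerm → M.Dom, ∀ f ∈ A, M.predI f.pred (f.args.map (evalGTerm M ν))

/-- `A2 ⊨ A1` (first-order logical entailment of existential closures). -/
def foEntails (A2 A1 : Set GFact) : Prop :=
  ∀ M : FOStruct, satisfiesEx M A2 → satisfiesEx M A1

/-! ### Miscellaneous -/

def constsOf (I : Set GFact) : Set ℕ := { c | ∃ f ∈ I, GTerm.const c ∈ f.args }

def predsOf (I : Set GFact) : Set ℕ := { p | ∃ f ∈ I, f.pred = p }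

/-- All facts of `B` and all atoms of `P` respect the arity function `ar`. -/
def respectsArity (ar : ℕ → ℕ) (P : Set Rule) (B : Set GFact) : Prop :=
  (∀ f ∈ B, f.args.length = ar f.pred) ∧
  ∀ r ∈ P, r.head.args.length = ar r.head.pred ∧ ∀ a ∈ r.body, a.args.length = ar a.pred



/-! ### Auxiliary material for Statement 9 -/

/-- The plain breadth-first (oblivious) chase iterates. -/
def Ch (P : Set Rule) (B : Set GFact) : ℕ → Set GFact
  | 0 => B
  | n + 1 => chaseStep P (Ch P B n)

lemma subset_chaseStep (P : Set Rule) (I : Set GFact) : I ⊆ chaseStep P I :=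
  fun _ hf => Or.inl hf

lemma chaseStep_mono {P : Set Rule} {I I' : Set GFact} (h : I ⊆ I') :
    chaseStep P I ⊆ chaseStep P I' := by
  rintro f (hf | ⟨r, hr, hh, hb, rfl⟩)
  · exact Or.inl (h hf)
  · exact Or.inr ⟨r, hr, hh, fun a ha => h (hb a ha), rfl⟩

lemma Ch_le {P : Set Rule} {B : Set GFact} {m n : ℕ} (hmn : m ≤ n) :
    Ch P B m ⊆ Ch P B n := by
  induction n with
  | zero => simpa [Nat.le_zero.mp hmn] using Set.Subset.refl _
  | succ n ih =>
      rcases Nat.lt_or_ge m (n+1) with h | h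
      · exact (ih (Nat.lt_succ_iff.mp h)).trans (subset_chaseStep P _)
      · have : m = n + 1 := le_antisymm hmn h
        simp [this]

lemma map_eq_pointwise {α β : Type*} {f g : α → β} :
    ∀ {l : List α}, l.map f = l.map g → ∀ x ∈ l, f x = g x := by
  intro l
  induction l with
  | nil => intro _ x hx; cases hx
  | cons a l ih =>
      intro hmap x hx
      simp only [List.map_cons, List.cons.injEq] at hmap
      rcases List.mem_cons.mp hx with rfl | hx
      · exact hmap.1
      · exact ih hmap.2 x hx

lemma canon_congr {r : Rule} {h h' : ℕ → GTerm}
    (hl : ∀ x ∈ r.bodyVars, h x = h' x) : ∀ y, r.canon h y = r.canon h' y := by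
  intro y
  have hmap : r.bodyVars.map h = r.bodyVars.map h' := List.map_congr_left hl
  by_cases hy : y ∈ r.bodyVars <;> simp [Rule.canon, hy, hl, hmap]

lemma applyRAtom_congr {a : RAtom} {h h' : ℕ → GTerm}
    (hl : ∀ y, h y = h' y) : applyRAtom h a = applyRAtom h' a := by
  simp [applyRAtom, List.map_congr_left (fun x _ => hl x)]

lemma mapT_applyRAtom (σ : GTerm → GTerm) (h : ℕ → GTerm) (a : RAtom) :
    (applyRAtom h a).mapT σ = applyRAtom (fun x => σ (h x)) a := by
  simp [applyRAtom, GFact.mapT]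

lemma bodyVars_occurs {r : Rule} {h : ℕ → GTerm} {I : Set GFact}
    (hb : ∀ a ∈ r.body, applyRAtom h a ∈ I) {x : ℕ} (hx : x ∈ r.bodyVars) :
    occursIn (h x) I := by
  rcases List.mem_flatMap.mp hx with ⟨a, ha, hxa⟩
  exact ⟨applyRAtom h a, hb a ha, List.mem_map.mpr ⟨x, hxa, rfl⟩⟩

/-- Every null occurring in `Ch P B n` was created canonically, together with
its fact. -/
lemma null_origin {P : Set Rule} {B : Set GFact}
    (hB : ∀ f ∈ B, f.constOnly) :
    ∀ n (r : Rule) (l : List GTerm) (x : ℕ),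
      occursIn (GTerm.null r l x) (Ch P B n) →
      ∃ h, l = r.bodyVars.map h ∧ applyRAtom (r.canon h) r.head ∈ Ch P B n := by
  intro n
  induction n with
  | zero =>
      intro r l x ⟨f, hf, hmem⟩
      exact absurd (hB f hf _ hmem) (by simp [GTerm.isConst])
  | succ n ih =>
      rintro r l x ⟨f, hf | ⟨r', hr', h', hb', rfl⟩, hmem⟩
      · rcases ih r l x ⟨f, hf, hmem⟩ with ⟨h, h1, h2⟩
        exact ⟨h, h1, Ch_le (Nat.le_succ n) h2⟩
      · simp only [applyRAtom] at hmem
        rcases List.mem_map.mp hmem with ⟨y, hy, hey⟩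
        by_cases hyb : y ∈ r'.bodyVars
        · have : r'.canon h' y = h' y := by simp [Rule.canon, hyb]
          rw [this] at hey
          have : occursIn (GTerm.null r l x) (Ch P B n) := by
            rw [← hey]; exact bodyVars_occurs hb' hyb
          rcases ih r l x this with ⟨h, h1, h2⟩
          exact ⟨h, h1, Ch_le (Nat.le_succ n) h2⟩
        · have : r'.canon h' y = GTerm.null r' (r'.bodyVars.map h') y := by
            simp [Rule.canon, hyb]
          rw [this] at hey
          obtain ⟨hr, hl2, hx⟩ : r' = r ∧ r'.bodyVars.map h' = l ∧ y = x := by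
            injection hey with h1 h2 h3; exact ⟨h1, h2, h3⟩
          subst hr; subst hx
          refine ⟨h', hl2.symm, Or.inr ⟨r', hr', h', hb', rfl⟩⟩

/-- Lifting a homomorphism through one chase step. -/
lemma hom_lift {P : Set Rule} {B J : Set GFact} {n : ℕ} {σ : GTerm → GTerm}
    (hB : ∀ f ∈ B, f.constOnly) (hσ : isHom σ (Ch P B n) J) :
    ∃ σ', isHom σ' (chaseStep P (Ch P B n)) (chaseStep P J) := by
  classical
  set I := Ch P B n with hI
  refine ⟨fun t => if occursIn t I then σ t else
    (match t with
     | .const c => .const c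
     | .null r l x => .null r (l.map σ) x), ?_, ?_⟩
  · intro c
    by_cases hc : occursIn (GTerm.const c) I <;> simp [hc, hσ.1 c]
  · rintro f hf
    have hmemI : ∀ f ∈ I, f.mapT (fun t => if occursIn t I then σ t else
        (match t with
         | .const c => .const c
         | .null r l x => .null r (l.map σ) x)) ∈ chaseStep P J := by
      intro f hfI
      have : f.mapT (fun t => if occursIn t I then σ t else
          (match t with
           | .const c => .const c
           | .null r l x => .null r (l.map σ) x)) = f.mapT σ := by
        simp only [GFact.mapT, GFact.mk.injEq, true_and]
        refine List.map_congr_left (fun t ht => ?_)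
        simp [show occursIn t I from ⟨f, hfI, ht⟩]
      rw [this]
      exact subset_chaseStep P J (hσ.2 f hfI)
    rcases hf with hfI | ⟨r, hr, h, hb, rfl⟩
    · exact hmemI f hfI
    · by_cases hfI : applyRAtom (r.canon h) r.head ∈ I
      · exact hmemI _ hfI
      · -- genuinely new fact
        rw [mapT_applyRAtom]
        have key : ∀ y, (if occursIn (r.canon h y) I then σ (r.canon h y) else
            (match r.canon h y with
             | .const c => .const c
             | .null r' l x => .null r' (l.map σ) x)) = r.canon (fun x => σ (h x)) y := by
          intro y
          by_cases hy : y ∈ r.bodyVars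
          · have h1 : r.canon h y = h y := by simp [Rule.canon, hy]
            have h2 : occursIn (h y) I := bodyVars_occurs hb hy
            rw [h1]
            simp [h2, Rule.canon, hy]
          · have h1 : r.canon h y = GTerm.null r (r.bodyVars.map h) y := by
              simp [Rule.canon, hy]
            have h2 : ¬ occursIn (GTerm.null r (r.bodyVars.map h) y) I := by
              intro hcon
              rcases null_origin hB n r _ y hcon with ⟨h'', hl'', hfact⟩
              have hpt : ∀ x ∈ r.bodyVars, h x = h'' x :=
                map_eq_pointwise hl''
              have : applyRAtom (r.canon h'') r.head = applyRAtom (r.canon h) r.head :=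
                applyRAtom_congr (canon_congr (fun x hx => (hpt x hx).symm))
              exact hfI (this ▸ hfact)
            rw [h1]
            simp only [h1, h2, if_neg, ite_false]
            have : r.canon (fun x => σ (h x)) y
                = GTerm.null r (r.bodyVars.map fun x => σ (h x)) y := by
              simp [Rule.canon, hy]
            rw [this, List.map_map]
            rfl
        rw [applyRAtom_congr key]
        exact Or.inr ⟨r, hr, fun x => σ (h x),
          fun a ha => by rw [← mapT_applyRAtom]; exact hσ.2 _ (hb a ha), rfl⟩

lemma isHom_id (A : Set GFact) : isHom (fun t => t) A A := by
  refine ⟨fun c => rfl, fun f hf => ?_⟩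
  have : f.mapT (fun t => t) = f := by simp [GFact.mapT]
  rwa [this]

lemma isHom_comp {σ τ : GTerm → GTerm} {A B C : Set GFact}
    (h1 : isHom σ A B) (h2 : isHom τ B C) : isHom (fun t => τ (σ t)) A C := by
  refine ⟨fun c => by show τ (σ (GTerm.const c)) = GTerm.const c; rw [h1.1 c, h2.1 c], fun f hf => ?_⟩
  have : f.mapT (fun t => τ (σ t)) = (f.mapT σ).mapT τ := by
    simp [GFact.mapT, List.map_map]
  rw [this]; exact h2.2 _ (h1.2 f hf)

lemma Step_subset_Ch {P : Set Rule} {B : Set GFact} :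
    ∀ n, Step P B n ⊆ Ch P B n := by
  intro n
  induction n with
  | zero => exact fun f hf => hf
  | succ n ih =>
      by_cases hc : homEntails (Step P B n) (chaseStep P (Step P B n))
      · rw [Step, if_pos hc]
        exact ih.trans (Ch_le (Nat.le_succ n))
      · rw [Step, if_neg hc]
        exact chaseStep_mono ih

lemma hom_Ch_Step {P : Set Rule} {B : Set GFact}
    (hB : ∀ f ∈ B, f.constOnly) :
    ∀ n, ∃ σ, isHom σ (Ch P B n) (Step P B n) := by
  intro n
  induction n with
  | zero => exact ⟨fun t => t, isHom_id B⟩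
  | succ n ih =>
      rcases ih with ⟨σ, hσ⟩
      rcases hom_lift hB hσ with ⟨σ', hσ'⟩
      by_cases hc : homEntails (Step P B n) (chaseStep P (Step P B n))
      · rw [Step, if_pos hc]
        rcases hc with ⟨τ, hτ⟩
        exact ⟨fun t => τ (σ' t), isHom_comp hσ' hτ⟩
      · rw [Step, if_neg hc]
        exact ⟨σ', hσ'⟩

/-! ### Execution graph lemmas -/

lemma EG.eval_def (G : EG) (B : Set GFact) (v : Fin G.n) :
    G.eval B v = nodeOut (G.rul v) (G.inp B v) := by
  rw [EG.eval]
  have heq : (fun i => match hp : G.parent v i with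
      | some u => G.eval B u
      | none => B) = G.inp B v := by
    funext i
    cases hp : G.parent v i
    · simp [EG.inp, hp]
    · simp [EG.inp, hp]
  rw [heq]

lemma EG.inp_none {G : EG} {B : Set GFact} {v : Fin G.n} {i : ℕ}
    (h : G.parent v i = none) : G.inp B v i = B := by
  simp [EG.inp, h]

lemma EG.inp_some {G : EG} {B : Set GFact} {v u : Fin G.n} {i : ℕ}
    (h : G.parent v i = some u) : G.inp B v i = G.eval B u := by
  simp [EG.inp, h]

lemma nodeDepth_parent {G : EG} {v u : Fin G.n} {i : ℕ}
    (h : G.parent v i = some u) : G.nodeDepth u + 1 ≤ G.nodeDepth v := by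
  conv_rhs => rw [EG.nodeDepth]
  exact Finset.le_sup (f := fun u : {x // x ∈ Finset.univ.filter fun u : Fin G.n =>
      ∃ i, G.parent v i = some u} => G.nodeDepth u.1 + 1)
    (Finset.mem_attach _ ⟨u, Finset.mem_filter.mpr ⟨Finset.mem_univ u, ⟨i, h⟩⟩⟩)

lemma nodeDepth_le {G : EG} {v : Fin G.n} {d : ℕ}
    (hpar : ∀ u i, G.parent v i = some u → G.nodeDepth u + 1 ≤ d) :
    G.nodeDepth v ≤ d := by
  conv_lhs => rw [EG.nodeDepth]
  refine Finset.sup_le fun u _ => ?_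
  rcases (Finset.mem_filter.mp u.2).2 with ⟨i, hi⟩
  exact hpar u.1 i hi

/-- Soundness: each node computes facts of the chase at its level. -/
lemma eval_subset_Ch {EP : Set ℕ} {P : Set Rule} {B : Set GFact} {G : EG}
    (hWF : G.WF EP P) : ∀ v, G.eval B v ⊆ Ch P B (G.nodeDepth v + 1) := by
  have main : ∀ (m : ℕ) (v : Fin G.n), v.val < m →
      G.eval B v ⊆ Ch P B (G.nodeDepth v + 1) := by
    intro m
    induction m with
    | zero => intro v hv; omega
    | succ m ih =>
        intro v hv f hf
        rw [EG.eval_def] at hf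
        rcases hf with ⟨h, hbody, rfl⟩
        refine Or.inr ⟨G.rul v, hWF.1 v, h, ?_, rfl⟩
        intro a ha
        rcases List.mem_iff_get.mp ha with ⟨i, rfl⟩
        have hb := hbody i
        cases hpv : G.parent v i.val with
        | none =>
            rw [EG.inp_none hpv] at hb
            exact Ch_le (Nat.zero_le _) hb
        | some u =>
            rw [EG.inp_some hpv] at hb
            have hu : u.val < m := by
              have := G.topo v i.val u hpv
              omega
            exact Ch_le (nodeDepth_parent hpv) (ih u hu hb)
  exact fun v => main (v.val + 1) v (Nat.lt_succ_self _)

lemma applyRAtom_pred (h : ℕ → GTerm) (a : RAtom) :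
    (applyRAtom h a).pred = a.pred := rfl

/-- Facts over extensional predicates in the chase come from the base instance. -/
lemma Ch_EP {EP : Set ℕ} {P : Set Rule} {B : Set GFact}
    (hP : ProgramWF EP P) :
    ∀ n f, f ∈ Ch P B n → f.pred ∈ EP → f ∈ B := by
  intro n
  induction n with
  | zero => exact fun f hf _ => hf
  | succ n ih =>
      rintro f (hf | ⟨r, hr, h, hb, rfl⟩) hEP
      · exact ih f hf hEP
      · exact absurd hEP ((hP r hr).1)

/-- Completeness: every chase fact at round `m ≤ k` is computed by some node
of the full level-`k` execution graph. -/
lemma Ch_subset_result {EP : Set ℕ} {P : Set Rule} {B : Set GFact} {k : ℕ}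
    {G : EG} (hP : ProgramWF EP P) (hB : BaseInstance EP B)
    (hfull : G.IsFullEG EP P k) :
    ∀ m, m ≤ k → ∀ f ∈ Ch P B m,
      f ∈ B ∨ ∃ v, f ∈ G.eval B v ∧ G.nodeDepth v + 1 ≤ m := by
  intro m
  induction m with
  | zero => exact fun _ f hf => Or.inl hf
  | succ m ih =>
      rintro hmk f (hf | ⟨r, hr, h, hb, rfl⟩)
      · rcases ih (le_of_lt hmk) f hf with hfB | ⟨v, hv, hd⟩
        · exact Or.inl hfB
        · exact Or.inr ⟨v, hv, hd.trans (Nat.le_succ m)⟩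
      · by_cases hext : r.extensionalBody EP
        · -- root node
          obtain ⟨v, hrv, hpv⟩ := hfull.2.2.1 (by omega) r hr hext
          have hd0 : G.nodeDepth v = 0 :=
            Nat.le_zero.mp (nodeDepth_le fun u i hi => by rw [hpv i] at hi; cases hi)
          refine Or.inr ⟨v, ?_, by omega⟩
          rw [EG.eval_def, hrv]
          refine ⟨h, fun i => ?_, rfl⟩
          rw [EG.inp_none (hpv i.val)]
          have := hb _ (List.get_mem r.body i)
          exact Ch_EP hP m _ this (hext _ (List.get_mem r.body i))
        · have hint : r.intensionalBody EP := ((hP r hr).2).resolve_left hext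
          have hne : 0 < r.body.length := by
            by_contra hlen
            have hnil : r.body = [] :=
              List.length_eq_zero_iff.mp (Nat.le_zero.mp (Nat.not_lt.mp hlen))
            exact hext fun a ha => absurd ha (by simp [hnil])
          -- for each body position get a node
          have hnodes : ∀ i : Fin r.body.length,
              ∃ u, applyRAtom h (r.body.get i) ∈ G.eval B u ∧ G.nodeDepth u + 1 ≤ m := by
            intro i
            have hmem : applyRAtom h (r.body.get i) ∈ Ch P B m :=
              hb _ (List.get_mem r.body i)
            rcases ih (le_of_lt hmk) _ hmem with hfB | ⟨u, hu, hd⟩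
            · exfalso
              have : (applyRAtom h (r.body.get i)).pred ∈ EP :=
                (hB _ hfB).1
              exact hint _ (List.get_mem r.body i) this
            · exact ⟨u, hu, hd⟩
          choose u hu hd using hnodes
          -- head-predicate compatibility
          have hpred : ∀ i, (G.rul (u i)).head.pred = (r.body.get i).pred := by
            intro i
            have := hu i
            rw [EG.eval_def] at this
            rcases this with ⟨h', _, heq⟩
            have := congrArg GFact.pred heq
            simpa [applyRAtom_pred] using this.symm
          have hnonempty : (Finset.univ : Finset (Fin r.body.length)).Nonempty :=
            ⟨⟨0, hne⟩, Finset.mem_univ _⟩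
          obtain ⟨i0, -, hi0⟩ := Finset.exists_mem_eq_sup Finset.univ hnonempty
            (fun i : Fin r.body.length => G.nodeDepth (u i))
          have hle : ∀ i, G.nodeDepth (u i) ≤ G.nodeDepth (u i0) := fun i => by
            rw [← hi0]; exact Finset.le_sup (f := fun i : Fin r.body.length => G.nodeDepth (u i)) (Finset.mem_univ i)
          have hmd_le : G.nodeDepth (u i0) + 1 ≤ m := hd i0
          obtain ⟨v, hrv, hpar, hnone⟩ := hfull.2.2.2 (G.nodeDepth (u i0) + 2)
            (by omega) (by omega) r hr hint u hpred
            (fun i => by have := hle i; omega)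
            ⟨i0, by omega⟩
          refine Or.inr ⟨v, ?_, ?_⟩
          · rw [EG.eval_def, hrv]
            refine ⟨h, fun i => ?_, rfl⟩
            rw [EG.inp_some (hpar i)]
            exact hu i
          · have : G.nodeDepth v ≤ G.nodeDepth (u i0) + 1 := by
              refine nodeDepth_le fun w j hj => ?_
              by_cases hjlen : j < r.body.length
              · have := hpar ⟨j, hjlen⟩
                rw [this] at hj
                have hw : w = u ⟨j, hjlen⟩ := by injection hj.symm
                rw [hw]
                have := hle ⟨j, hjlen⟩
                omega
              · rw [hnone j (Nat.not_lt.mp hjlen)] at hj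
                cases hj
            omega

/-- For any program `P`, base instance `B` and `k ≥ 0`, the
instance computed by the level-`k` full execution graph of `P` on `B` is
logically equivalent to `Step^k(P,B)`. -/
theorem statement_9 (EP : Set ℕ) (P : Set Rule) (hP : ProgramWF EP P)
    (B : Set GFact) (hB : BaseInstance EP B) (k : ℕ) (G : EG)
    (hfull : G.IsFullEG EP P k) :
    homEquiv (G.result B) (Step P B k) := by
  have hBco : ∀ f ∈ B, f.constOnly := fun f hf => (hB f hf).2
  have sound : G.result B ⊆ Ch P B k := by
    rintro f (hfB | hf)
    · exact Ch_le (Nat.zero_le k) hfB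
    · rcases Set.mem_iUnion.mp hf with ⟨v, hv⟩
      exact Ch_le (hfull.2.1 v) (eval_subset_Ch hfull.1 v hv)
  have complete : Ch P B k ⊆ G.result B := by
    intro f hf
    rcases Ch_subset_result hP hB hfull k le_rfl f hf with hfB | ⟨v, hv, _⟩
    · exact Or.inl hfB
    · exact Or.inr (Set.mem_iUnion.mpr ⟨v, hv⟩)
  constructor
  · -- hom from Step k into G.result B
    refine ⟨fun t => t, fun c => rfl, fun f hf => ?_⟩
    have : f.mapT (fun t => t) = f := by simp [GFact.mapT]
    rw [this]
    exact complete (Step_subset_Ch k hf)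
  · -- hom from G.result B into Step k
    rcases hom_Ch_Step hBco k with ⟨σ, hσ⟩
    exact ⟨σ, hσ.1, fun f hf => hσ.2 f (sound hf)⟩

end TGpaper
end

section
/- If a program P is bounded (there exists k with Step^k(P,B) ⊨ Step^{k+1}(P,B) for all base instances B), then P is term-depth bounded: every term appearing in any chase instance Step^i(P,B), for any i and any B, has depth at most k+1. -/
set_option maxHeartbeats 1000000

namespace TGpaper

attribute [local instance] Classical.propDecidable

lemma foldr_max_le {l : List ℕ} {b : ℕ} (h : ∀ x ∈ l, x ≤ b) :
    l.foldr max 0 ≤ b := by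
  induction l with
  | nil => simp
  | cons a t ih =>
      simp only [List.foldr_cons]
      exact max_le (h a (by simp)) (ih fun x hx => h x (List.mem_cons_of_mem _ hx))

lemma depth_le_of_step (P : Set Rule) (B : Set GFact) (hB : NullFree B) :
    ∀ i, ∀ f ∈ Step P B i, ∀ t ∈ f.args, t.depth ≤ i + 1 := by
  intro i
  induction i with
  | zero =>
      intro f hf t ht
      have := hB f hf t ht
      cases t with
      | const c => simp [GTerm.depth]
      | null r ts z => exact absurd this (by simp [GTerm.isConst])
  | succ n ih =>
      intro f hf t ht
      rw [Step] at hf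
      split at hf
      · exact le_trans (ih f hf t ht) (by omega)
      · rcases hf with hf | ⟨r, hr, h, hbody, rfl⟩
        · exact le_trans (ih f hf t ht) (by omega)
        · -- t is in the image of r.canon h on head args
          simp only [applyRAtom, List.mem_map] at ht
          obtain ⟨x, hx, rfl⟩ := ht
          have hbv : ∀ y ∈ r.bodyVars, (h y).depth ≤ n + 1 := by
            intro y hy
            rw [Rule.bodyVars, List.mem_flatMap] at hy
            obtain ⟨a, ha, hya⟩ := hy
            exact ih _ (hbody a ha) (h y) (by simp [applyRAtom]; exact ⟨y, hya, rfl⟩)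
          rw [Rule.canon]
          split
          · exact le_trans (hbv x (by assumption)) (by omega)
          · rw [GTerm.depth]
            have : ((r.bodyVars.map h).attach.map (fun t => t.1.depth)).foldr max 0 ≤ n + 1 := by
              apply foldr_max_le
              intro d hd
              simp only [List.mem_map, List.mem_attach, true_and] at hd
              obtain ⟨⟨u, hu⟩, rfl⟩ := hd
              simp only [List.mem_map] at hu
              obtain ⟨y, hy, rfl⟩ := hu
              exact hbv y hy
            omega

lemma step_stall (P : Set Rule) (B : Set GFact) (k : ℕ)
    (hk : homEntails (Step P B k) (chaseStep P (Step P B k))) :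
    ∀ j, Step P B (k + j) = Step P B k := by
  intro j
  induction j with
  | zero => rfl
  | succ m ih =>
      show Step P B (k + m + 1) = Step P B k
      rw [Step, ih, if_pos hk]

/-- If `P` is bounded with bound `k`, then `P` is term-depth
bounded: every term appearing in any chase instance `Step^i(P,B)` has depth at
most `k+1`. -/
theorem statement_11 (EP : Set ℕ) (P : Set Rule) (hP : ProgramWF EP P) (k : ℕ)
    (hbdd : ∀ B, BaseInstance EP B →
        homEntails (Step P B k) (Step P B (k + 1))) :
    ∀ B, BaseInstance EP B → ∀ i, ∀ f ∈ Step P B i, ∀ t ∈ f.args,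
      t.depth ≤ k + 1 := by
  intro B hB i f hf t ht
  have hNF : NullFree B := fun g hg => (hB g hg).2
  have hdep := depth_le_of_step P B hNF
  by_cases hik : i ≤ k
  · exact le_trans (hdep i f hf t ht) (by omega)
  · have hk : homEntails (Step P B k) (chaseStep P (Step P B k)) := by
      by_contra hc
      have h1 : Step P B (k + 1) = chaseStep P (Step P B k) := by
        rw [Step, if_neg hc]
      exact hc (h1 ▸ hbdd B hB)
    have : Step P B i = Step P B k := by
      have := step_stall P B k hk (i - k)
      rwa [Nat.add_sub_cancel' (by omega)] at this
    exact hdep k f (this ▸ hf) t ht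

end TGpaper
end

section
/- Let G be an execution graph for a Datalog program P and v a node of G with head atom A(X⃗). For every base instance B, v(B) = { A(t⃗) : t⃗ is an answer to the EG-rewriting rew(v) of v on B }. -/
set_option maxHeartbeats 1000000

namespace TGpaper

attribute [local instance] Classical.propDecidable

/-! ### Auxiliary machinery for Statement 15 -/

def instOf (G : EG) (B : Set GFact) : Option (Fin G.n) → Set GFact
  | some u => G.eval B u
  | none => B

lemma eval_eq (G : EG) (B : Set GFact) (v : Fin G.n) :
    G.eval B v = nodeOut (G.rul v) (fun i => instOf G B (G.parent v i)) := by
  rw [EG.eval]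
  have h : (fun i => match hp : G.parent v i with | some u => G.eval B u | none => B)
      = fun i => instOf G B (G.parent v i) := by
    funext i
    split <;> simp_all [instOf]
  rw [h]

lemma applyRAtom_sub (σ : ℕ → GTerm) (θ : ℕ → ℕ) (a : RAtom) :
    applyRAtom σ (applyVSub θ a) = applyRAtom (fun x => σ (θ x)) a := by
  simp [applyRAtom, applyVSub, List.map_map, Function.comp]

lemma applyRAtom_congr_s15 {σ σ' : ℕ → GTerm} {a : RAtom}
    (h : ∀ x ∈ a.args, σ x = σ' x) : applyRAtom σ a = applyRAtom σ' a := by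
  simp only [applyRAtom]
  congr 1
  exact List.map_congr_left h

lemma canon_eq (r : Rule) (h : ℕ → GTerm) {x : ℕ} (hx : x ∈ r.bodyVars) :
    r.canon h x = h x := by
  simp [Rule.canon, hx]

lemma mem_bodyVars {r : Rule} {a : RAtom} (ha : a ∈ r.body) {x : ℕ} (hx : x ∈ a.args) :
    x ∈ r.bodyVars := List.mem_flatMap.mpr ⟨a, ha, hx⟩

/-- The semantics of a rewriting state: atoms tagged with a node are evaluated
over the output of that node, untagged atoms over the base instance. -/
def Sset (G : EG) (B : Set GFact) (v : Fin G.n) (q : QState G) : Set GFact :=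
  { f | ∃ σ : ℕ → GTerm, (∀ p ∈ q.atoms, applyRAtom σ p.1 ∈ instOf G B p.2) ∧
        f = ⟨(G.rul v).head.pred, q.headVars.map σ⟩ }

lemma Sset_init (G : EG) (B : Set GFact) (v : Fin G.n) :
    Sset G B v (initState G v) = G.eval B v := by
  ext f
  simp only [Sset, initState, Set.mem_setOf_eq]
  constructor
  · rintro ⟨σ, hσ, rfl⟩
    have := hσ ((G.rul v).head, some v) (by simp)
    simpa [instOf, applyRAtom] using this
  · intro hf
    have hf' := hf
    rw [eval_eq] at hf'
    obtain ⟨h0, _, heq⟩ := hf'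
    refine ⟨(G.rul v).canon h0, ?_, ?_⟩
    · intro p hp
      simp only [List.mem_singleton] at hp
      subst hp
      simpa [instOf, ← heq] using hf
    · rw [heq]; rfl

lemma Sset_step (G : EG) (B : Set GFact) (v : Fin G.n)
    (hD : ∀ u : Fin G.n, (G.rul u).isDatalog)
    {q q' : QState G} (hstep : RewStep G q q') :
    Sset G B v q = Sset G B v q' := by
  classical
  obtain ⟨pre, post, a, u, ρ, θ, hq, hρinj, hρfresh, hmgu, hhv, hat⟩ := hstep
  have hhvs : ∀ x ∈ q.headVars, x ∈ stateVars q := fun x hx => Or.inl hx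
  ext f
  constructor
  · rintro ⟨σ, hσ, rfl⟩
    have ha : applyRAtom σ a ∈ G.eval B u := by
      have := hσ (a, some u) (by rw [hq]; simp)
      simpa [instOf] using this
    rw [eval_eq] at ha
    obtain ⟨h0, hbody, heq⟩ := ha
    set τ : ℕ → GTerm := fun x =>
      if hx : ∃ y, ρ y = x then (G.rul u).canon h0 hx.choose else σ x with hτ
    have hτρ : ∀ y, τ (ρ y) = (G.rul u).canon h0 y := by
      intro y
      have hex : ∃ y', ρ y' = ρ y := ⟨y, rfl⟩
      simp only [hτ, dif_pos hex]
      rw [hρinj hex.choose_spec]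
    have hτs : ∀ x ∈ stateVars q, τ x = σ x := by
      intro x hx
      have hne : ¬ ∃ y, ρ y = x := by
        rintro ⟨y, rfl⟩; exact hρfresh y hx
      simp [hτ, hne]
    have hav : ∀ x ∈ a.args, x ∈ stateVars q := by
      intro x hx; exact Or.inr ⟨(a, some u), by rw [hq]; simp, hx⟩
    have hunif : applyRAtom τ (applyVSub ρ (G.rul u).head) = applyRAtom τ a := by
      rw [applyRAtom_sub]
      calc applyRAtom (fun x => τ (ρ x)) (G.rul u).head
          = applyRAtom ((G.rul u).canon h0) (G.rul u).head :=
            applyRAtom_congr_s15 (fun x _ => hτρ x)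
        _ = applyRAtom σ a := heq.symm
        _ = applyRAtom τ a := (applyRAtom_congr_s15 (fun x hx => hτs x (hav x hx))).symm
    obtain ⟨σ', hσ'⟩ := hmgu.2 τ hunif
    have hcomp : ∀ b : RAtom, applyRAtom σ' (applyVSub θ b) = applyRAtom τ b := by
      intro b
      rw [applyRAtom_sub]
      exact applyRAtom_congr_s15 (fun x _ => (hσ' x).symm)
    refine ⟨σ', ?_, ?_⟩
    · intro p hp
      rw [hat] at hp
      rcases List.mem_append.mp hp with hp | hp
      · rcases List.mem_append.mp hp with hp | hp
        · obtain ⟨p0, hp0, rfl⟩ := List.mem_map.mp hp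
          have hv0 : ∀ x ∈ p0.1.args, x ∈ stateVars q := by
            intro x hx
            exact Or.inr ⟨p0, by rw [hq]; simp [List.mem_append.mpr (Or.inl hp0)], hx⟩
          have : applyRAtom σ' (applyVSub θ p0.1) = applyRAtom σ p0.1 := by
            rw [hcomp]; exact applyRAtom_congr_s15 (fun x hx => hτs x (hv0 x hx))
          rw [this]
          exact hσ p0 (by rw [hq]; simp [List.mem_append.mpr (Or.inl hp0)])
        · obtain ⟨i, hi⟩ := List.mem_ofFn.mp hp
          subst hi
          simp only
          rw [hcomp, applyRAtom_sub]
          have : applyRAtom (fun x => τ (ρ x)) ((G.rul u).body.get i)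
              = applyRAtom h0 ((G.rul u).body.get i) := by
            refine applyRAtom_congr_s15 (fun x hx => ?_)
            rw [hτρ]
            exact canon_eq _ _ (mem_bodyVars (List.get_mem _ i) hx)
          rw [this]
          exact hbody i
      · obtain ⟨p0, hp0, rfl⟩ := List.mem_map.mp hp
        have hv0 : ∀ x ∈ p0.1.args, x ∈ stateVars q := by
          intro x hx
          exact Or.inr ⟨p0, by rw [hq]; simp [hp0], hx⟩
        have : applyRAtom σ' (applyVSub θ p0.1) = applyRAtom σ p0.1 := by
          rw [hcomp]; exact applyRAtom_congr_s15 (fun x hx => hτs x (hv0 x hx))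
        rw [this]
        exact hσ p0 (by rw [hq]; simp [hp0])
    · have : q'.headVars.map σ' = q.headVars.map σ := by
        rw [hhv, List.map_map]
        refine List.map_congr_left (fun x hx => ?_)
        simp only [Function.comp]
        rw [← hσ' x]
        exact hτs x (hhvs x hx)
      rw [this]
  · rintro ⟨σ', hσ', rfl⟩
    refine ⟨fun x => σ' (θ x), ?_, ?_⟩
    · intro p hp
      rw [hq] at hp
      rcases List.mem_append.mp hp with hp | hp
      · have := hσ' (applyVSub θ p.1, p.2)
          (by rw [hat]; exact List.mem_append.mpr (Or.inl (List.mem_append.mpr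
            (Or.inl (List.mem_map.mpr ⟨p, hp, rfl⟩)))))
        rwa [applyRAtom_sub] at this
      · rcases List.mem_cons.mp hp with rfl | hp
        swap
        · have := hσ' (applyVSub θ p.1, p.2)
            (by rw [hat]; exact List.mem_append.mpr (Or.inr (List.mem_map.mpr ⟨p, hp, rfl⟩)))
          rwa [applyRAtom_sub] at this
        · -- the unified atom: show it lies in eval B u
          simp only [instOf]
          rw [eval_eq]
          set h0 : ℕ → GTerm := fun x => σ' (θ (ρ x)) with hh0
          refine ⟨h0, ?_, ?_⟩
          · intro i
            have := hσ' (applyVSub θ (applyVSub ρ ((G.rul u).body.get i)), G.parent u i.val)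
              (by rw [hat]; exact List.mem_append.mpr (Or.inl (List.mem_append.mpr
                (Or.inr (List.mem_ofFn.mpr ⟨i, rfl⟩)))))
            rwa [applyRAtom_sub, applyRAtom_sub] at this
          · have h1 : applyRAtom (fun x => σ' (θ x)) a
                = applyRAtom (fun x => σ' (θ x)) (applyVSub ρ (G.rul u).head) := by
              have := hmgu.1
              calc applyRAtom (fun x => σ' (θ x)) a
                  = applyRAtom σ' (applyVSub θ a) := (applyRAtom_sub _ _ _).symm
                _ = applyRAtom σ' (applyVSub θ (applyVSub ρ (G.rul u).head)) := by rw [this]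
                _ = applyRAtom (fun x => σ' (θ x)) (applyVSub ρ (G.rul u).head) :=
                    applyRAtom_sub _ _ _
            rw [h1, applyRAtom_sub]
            refine applyRAtom_congr_s15 (fun x hx => ?_)
            rw [canon_eq _ _ (hD u x hx)]
    · rw [hhv, List.map_map]; rfl

/-- For a Datalog program, the facts computed at node `v` of an
execution graph are exactly the head facts instantiated by the answers of the
EG-rewriting of `v` on the base instance. -/
theorem statement_15 (EP : Set ℕ) (P : Set Rule) (G : EG)
    (hP : ProgramWF EP P) (hDat : ∀ r ∈ P, r.isDatalog) (hwf : G.WF EP P)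
    (v : Fin G.n) (q : QState G) (hq : IsEGRewriting G v q) :
    ∀ B, BaseInstance EP B →
      G.eval B v =
        { f : GFact |
          ∃ t, stateAnswer q B t ∧ f = ⟨(G.rul v).head.pred, t⟩ } := by
  intro B hB
  have hD : ∀ u : Fin G.n, (G.rul u).isDatalog := fun u => hDat _ (hwf.1 u)
  obtain ⟨hsteps, hterm⟩ := hq
  have key : Sset G B v q = G.eval B v := by
    have main : ∀ q', Relation.ReflTransGen (RewStep G) (initState G v) q' →
        Sset G B v q' = G.eval B v := by
      intro q' h
      induction h with
      | refl => exact Sset_init G B v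
      | tail _ hstep ih => rw [← Sset_step G B v hD hstep]; exact ih
    exact main q hsteps
  rw [← key]
  ext f
  simp only [Sset, Set.mem_setOf_eq, stateAnswer]
  constructor
  · rintro ⟨σ, hσ, rfl⟩
    refine ⟨_, ⟨σ, rfl, fun p hp => ?_⟩, rfl⟩
    have h1 := hσ p hp
    rwa [hterm p hp] at h1
  · rintro ⟨t, ⟨σ, ht, hσ⟩, rfl⟩
    refine ⟨σ, fun p hp => ?_, by rw [ht]⟩
    rw [hterm p hp]
    exact hσ p hp


end TGpaper
end
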